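/- Let δ_0 ≥ δ_1 ≥ δ_2 ≥ ⋯ be a decreasing sequence of positive real numbers and let S ⊆ ℝ be a finite nonempty set. Then there exists a nonempty subset R ⊆ S with |R| = r such that every z ∈ S satisfies dist(z, R) ≤ δ_r, and every pair of distinct points x, y ∈ R satisfies |x − y| ≥ δ_{r−1}. -/

import Mathlib

/-!
Among the nonempty subsets of `S` that are separated at the scale `δ (|R| - 1)` (singletons are),
take one of maximal size. If some `z ∈ S` were farther than `δ |R|` from all of `R`, adding `z`
would give a larger separated set: the new pairs are farther apart than `δ |R|`, and the old ones
were at least `δ (|R| - 1) ≥ δ |R|` apart.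
-/

open Finset

variable {α : Type*} [PseudoMetricSpace α]

def IsScaleSeparated (δ : ℕ → ℝ) (R : Finset α) : Prop :=
  ∀ w ∈ R, ∀ w' ∈ R, w ≠ w' → δ (#R - 1) ≤ dist w w'

lemma isScaleSeparated_singleton (δ : ℕ → ℝ) (x : α) : IsScaleSeparated δ {x} := by
  intro w hw w' hw' hne
  simp_all

lemma IsScaleSeparated.insert [DecidableEq α] {δ : ℕ → ℝ} {R : Finset α} {z : α}
    (hmono : Antitone δ) (hR : IsScaleSeparated δ R) (hz : z ∉ R)
    (hfar : ∀ w ∈ R, δ #R < dist z w) : IsScaleSeparated δ (insert z R) := by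
  intro w hw w' hw' hne
  rw [card_insert_of_notMem hz, Nat.add_sub_cancel]
  rcases mem_insert.mp hw with rfl | hwR <;> rcases mem_insert.mp hw' with rfl | hw'R
  · exact absurd rfl hne
  · exact (hfar w' hw'R).le
  · exact dist_comm w w' ▸ (hfar w hwR).le
  · exact (hmono (Nat.sub_le _ 1)).trans (hR w hwR w' hw'R hne)

lemma exists_isScaleSeparated_covering {δ : ℕ → ℝ} (hδ : ∀ m, 0 ≤ δ m) (hmono : Antitone δ)
    {S : Finset α} (hS : S.Nonempty) :
    ∃ R ⊆ S, R.Nonempty ∧ (∀ z ∈ S, ∃ w ∈ R, dist z w ≤ δ #R) ∧ IsScaleSeparated δ R := by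
  classical
  set C := S.powerset.filter fun R => R.Nonempty ∧ IsScaleSeparated δ R
  obtain ⟨x, hx⟩ := hS
  have hxC : {x} ∈ C := by
    simp only [C, mem_filter, mem_powerset, singleton_subset_iff]
    exact ⟨hx, singleton_nonempty x, isScaleSeparated_singleton δ x⟩
  obtain ⟨R, hRC, hRmax⟩ := exists_max_image C card ⟨_, hxC⟩
  simp only [C, mem_filter, mem_powerset] at hRC hRmax
  obtain ⟨hRS, hRne, hRsep⟩ := hRC
  refine ⟨R, hRS, hRne, ?_, hRsep⟩
  by_contra! hcov
  obtain ⟨z, hzS, hfar⟩ := hcov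
  have hzR : z ∉ R := fun hzR => by simpa using (hδ #R).trans_lt (hfar z hzR)
  have hlarger := hRmax (insert z R)
    ⟨insert_subset hzS hRS, insert_nonempty z R, hRsep.insert hmono hzR hfar⟩
  rw [card_insert_of_notMem hzR] at hlarger
  omega

theorem statement19 (δ : ℕ → ℝ) (hpos : ∀ m, 0 < δ m) (hmono : Antitone δ)
    (S : Finset ℝ) (hS : S.Nonempty) :
    ∃ R : Finset ℝ, R ⊆ S ∧ R.Nonempty ∧
      (∀ z ∈ S, ∃ w ∈ R, |z - w| ≤ δ R.card) ∧
      (∀ w ∈ R, ∀ w' ∈ R, w ≠ w' → δ (R.card - 1) ≤ |w - w'|) := by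
  obtain ⟨R, hRS, hRne, hcov, hsep⟩ :=
    exists_isScaleSeparated_covering (fun m => (hpos m).le) hmono hS
  simp only [Real.dist_eq] at hcov hsep
  exact ⟨R, hRS, hRne, hcov, hsep⟩
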